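/- Let p be a probability vector on [K] with all entries positive, W an invertible K×K row-stochastic matrix, and p̂ₙ = Proj(t(Y₁,…,Yₙ)·W⁻¹) an estimator based on n i.i.d. samples Y₁,…,Yₙ with distribution pW, where Proj is any map into the simplex that fixes every point of the simplex. Then E[ ‖p̂ₙ − p‖₂² ] = (1/n)·Σ_{k=1}^{K} ( ν_{2,k} − p_k² ) + O( exp(−n·D(∂ℙW ‖ pW)) ). -/

import Mathlib

open Finset Filter Asymptotics

namespace RRStmt

def simplex (K : ℕ) : Set (Fin K → ℝ) :=
  {p | (∀ k, 0 ≤ p k) ∧ ∑ k, p k = 1}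

def simplexBoundary (K : ℕ) : Set (Fin K → ℝ) :=
  {p | p ∈ simplex K ∧ ∃ k, p k = 0}

/-- Kullback–Leibler divergence between two vectors on `Fin K`. -/
noncomputable def KL {K : ℕ} (u v : Fin K → ℝ) : ℝ :=
  ∑ k, u k * Real.log (u k / v k)

/-- Boundary information projection `D(∂ℙW ‖ pW)`. -/
noncomputable def Dbnd {K : ℕ} (p : Fin K → ℝ) (W : Matrix (Fin K) (Fin K) ℝ) : ℝ :=
  sInf ((fun r => KL (Matrix.vecMul r W) (Matrix.vecMul p W)) '' simplexBoundary K)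

/-- Empirical distribution (type) of a sample sequence. -/
noncomputable def empDist {K n : ℕ} (y : Fin n → Fin K) : Fin K → ℝ :=
  fun k => ((Finset.univ.filter fun i => y i = k).card : ℝ) / n

/-- Expectation of `g` under `n` i.i.d. samples with distribution `q`. -/
noncomputable def iidE {K : ℕ} (q : Fin K → ℝ) (n : ℕ) (g : (Fin n → Fin K) → ℝ) : ℝ :=
  ∑ y : Fin n → Fin K, (∏ i, q (y i)) * g y

open Classical in
/-- Probability of event `E` under `n` i.i.d. samples with distribution `q`. -/
noncomputable def iidP {K : ℕ} (q : Fin K → ℝ) (n : ℕ) (E : Set (Fin n → Fin K)) : ℝ :=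
  ∑ y : Fin n → Fin K, if y ∈ E then ∏ i, q (y i) else 0

def RowStochastic {K : ℕ} (W : Matrix (Fin K) (Fin K) ℝ) : Prop :=
  (∀ i j, 0 ≤ W i j) ∧ ∀ i, ∑ j, W i j = 1

def EpsPrivate {K : ℕ} (ε : ℝ) (W : Matrix (Fin K) (Fin K) ℝ) : Prop :=
  ∀ k k' l, W k l ≤ Real.exp ε * W k' l

def IsCirculant {K : ℕ} (W : Matrix (Fin K) (Fin K) ℝ) : Prop :=
  ∃ w : Fin K → ℝ, ∀ i j, W i j = w (j - i)

def IsPermMatrix {K : ℕ} (W : Matrix (Fin K) (Fin K) ℝ) : Prop :=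
  ∃ σ : Equiv.Perm (Fin K), ∀ i j, W i j = if σ i = j then 1 else 0

noncomputable def nu {K : ℕ} (p : Fin K → ℝ) (W : Matrix (Fin K) (Fin K) ℝ)
    (ρ : ℕ) (k : Fin K) : ℝ :=
  ∑ j, Matrix.vecMul p W j * (W⁻¹ j k) ^ ρ

noncomputable def Phi {K : ℕ} (W : Matrix (Fin K) (Fin K) ℝ) : Matrix (Fin K) (Fin K) ℝ :=
  W * Matrix.hadamard W⁻¹ W⁻¹

noncomputable def phiSum {K : ℕ} (W : Matrix (Fin K) (Fin K) ℝ) : ℝ :=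
  ∑ k, ∑ l, Phi W k l

noncomputable def stepMech (K : ℕ) (ε : ℝ) : Matrix (Fin K) (Fin K) ℝ :=
  Matrix.of fun i j => if i = j then Real.exp ε / (Real.exp ε + K - 1)
                       else 1 / (Real.exp ε + K - 1)

/-!
The unprojected estimator `t W⁻¹` is an average of `n` i.i.d. vectors with mean `p`, so its mean
squared error is exactly `(1/n) ∑ₖ (ν₂,ₖ - pₖ²)`. The projection changes the loss only on the event
that `t W⁻¹` leaves the simplex, i.e. that `∑ᵢ W⁻¹ (Yᵢ, k) < 0` for some `k`, and both losses are
bounded there. A Chernoff bound, taken at the exponent for which the exponentially tilted law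
`s ∝ pW · exp (-λ W⁻¹ (·, k))` has `(s W⁻¹)ₖ = 0`, bounds the probability of this event by
`exp (-n D(s ‖ pW))`. Finally `s W⁻¹` sums to one and vanishes at `k`; moving it towards `p` until
it lands on `∂ℙ` only decreases `D(· W ‖ pW)` by convexity, so `D(s ‖ pW) ≥ D(∂ℙW ‖ pW)`.
-/

section IID

variable {K : ℕ} (q : Fin K → ℝ) (n : ℕ)

lemma iidE_prod (F : Fin n → Fin K → ℝ) :
    iidE q n (fun y => ∏ i, F i (y i)) = ∏ i, ∑ j, q j * F i j := by
  rw [iidE, prod_univ_sum, Fintype.piFinset_univ]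
  exact sum_congr rfl fun y _ => prod_mul_distrib.symm

lemma iidE_sum {ι : Type*} (s : Finset ι) (G : ι → (Fin n → Fin K) → ℝ) :
    iidE q n (fun y => ∑ k ∈ s, G k y) = ∑ k ∈ s, iidE q n (G k) := by
  simp only [iidE, mul_sum]
  exact sum_comm

lemma iidE_const_mul (c : ℝ) (g : (Fin n → Fin K) → ℝ) :
    iidE q n (fun y => c * g y) = c * iidE q n g := by
  simp only [iidE, mul_sum]
  exact sum_congr rfl fun _ _ => mul_left_comm _ _ _

lemma iidE_mono (hq : ∀ j, 0 ≤ q j) {g h : (Fin n → Fin K) → ℝ} (hgh : ∀ y, g y ≤ h y) :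
    iidE q n g ≤ iidE q n h :=
  sum_le_sum fun y _ => mul_le_mul_of_nonneg_left (hgh y) (prod_nonneg fun i _ => hq (y i))

lemma iidP_eq_iidE_indicator (E : Set (Fin n → Fin K)) :
    iidP q n E = iidE q n (E.indicator 1) := by
  simp only [iidP, iidE]
  refine sum_congr rfl fun y _ => ?_
  by_cases hy : y ∈ E <;> simp [hy]

lemma iidE_mul_apply (hq : ∑ j, q j = 1) (f g : Fin K → ℝ) (i i' : Fin n) :
    iidE q n (fun y => f (y i) * g (y i')) =
      if i = i' then ∑ j, q j * (f j * g j) else (∑ j, q j * f j) * ∑ j, q j * g j := by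
  set F : Fin n → Fin K → ℝ := fun m j => (if m = i then f j else 1) * (if m = i' then g j else 1)
  have hF : (fun y : Fin n → Fin K => f (y i) * g (y i')) = fun y => ∏ m, F m (y m) := by
    funext y
    rw [prod_mul_distrib, prod_ite_eq' univ i fun m => f (y m),
      prod_ite_eq' univ i' fun m => g (y m)]
    simp
  have hone : ∀ m, m ≠ i → m ≠ i' → ∑ j, q j * F m j = 1 := fun m hi hi' => by simp [F, hi, hi', hq]
  rw [hF, iidE_prod]
  split_ifs with h
  · subst h
    rw [Fintype.prod_eq_single i fun m hm => hone m hm hm]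
    simp [F]
  · rw [Fintype.prod_eq_mul i i' h fun m hm => hone m hm.1 hm.2]
    simp [F, h, Ne.symm h]

lemma iidE_sq_sum (hq : ∑ j, q j = 1) (f : Fin K → ℝ) (hf : ∑ j, q j * f j = 0) :
    iidE q n (fun y => (∑ i, f (y i)) ^ 2) = n * ∑ j, q j * f j ^ 2 := by
  simp_rw [sq, sum_mul_sum, iidE_sum, iidE_mul_apply q n hq, hf, mul_zero]
  simp

lemma abs_iidE_sub_le_mul_iidP (hq : ∀ j, 0 ≤ q j) {g h : (Fin n → Fin K) → ℝ}
    {B : Set (Fin n → Fin K)} {C : ℝ} (heq : ∀ y ∉ B, g y = h y) (hbd : ∀ y, |g y - h y| ≤ C) :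
    |iidE q n g - iidE q n h| ≤ C * iidP q n B := by
  rw [iidP_eq_iidE_indicator, ← iidE_const_mul, iidE, iidE, iidE, ← sum_sub_distrib]
  refine (abs_sum_le_sum_abs _ _).trans (sum_le_sum fun y _ => ?_)
  rw [← mul_sub, abs_mul, abs_of_nonneg (prod_nonneg fun i _ => hq (y i))]
  refine mul_le_mul_of_nonneg_left ?_ (prod_nonneg fun i _ => hq (y i))
  by_cases hy : y ∈ B
  · simpa [hy] using hbd y
  · simp [hy, heq y hy]

lemma iidP_le_sum_iidP (hq : ∀ j, 0 ≤ q j) {ι : Type*} [Fintype ι] {B : Set (Fin n → Fin K)}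
    {E : ι → Set (Fin n → Fin K)} (hB : B ⊆ ⋃ k, E k) :
    iidP q n B ≤ ∑ k, iidP q n (E k) := by
  simp only [iidP_eq_iidE_indicator]
  rw [← iidE_sum]
  refine iidE_mono q n hq fun y => ?_
  by_cases hy : y ∈ B
  · obtain ⟨k, hk⟩ := Set.mem_iUnion.1 (hB hy)
    calc B.indicator 1 y = (E k).indicator 1 y := by simp [hy, hk]
      _ ≤ ∑ k, (E k).indicator 1 y :=
        single_le_sum (f := fun k => (E k).indicator (1 : (Fin n → Fin K) → ℝ) y)
          (fun k _ => Set.indicator_nonneg (fun _ _ => zero_le_one) y) (mem_univ k)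
  · simp only [hy, not_false_eq_true, Set.indicator_of_notMem]
    exact sum_nonneg fun k _ => Set.indicator_nonneg (fun _ _ => zero_le_one) y

lemma iidP_sum_neg_le (hq : ∀ j, 0 ≤ q j) (f : Fin K → ℝ) {t : ℝ} (ht : 0 ≤ t) :
    iidP q n {y | ∑ i, f (y i) < 0} ≤ (∑ j, q j * Real.exp (-t * f j)) ^ n := by
  calc iidP q n {y | ∑ i, f (y i) < 0}
      ≤ iidE q n (fun y => ∏ i, Real.exp (-t * f (y i))) := by
        rw [iidP_eq_iidE_indicator]
        refine iidE_mono q n hq fun y => ?_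
        by_cases hy : y ∈ {y : Fin n → Fin K | ∑ i, f (y i) < 0}
        · rw [Set.indicator_of_mem hy, Pi.one_apply, ← Real.exp_sum, ← mul_sum]
          exact Real.one_le_exp (by nlinarith [show ∑ i, f (y i) < 0 from hy])
        · rw [Set.indicator_of_notMem hy]
          positivity
    _ = (∑ j, q j * Real.exp (-t * f j)) ^ n := by
        rw [iidE_prod q n fun _ j => Real.exp (-t * f j), prod_const, card_univ, Fintype.card_fin]

end IID

section Simplex

variable {K : ℕ}

lemma le_one_of_mem_simplex {x : Fin K → ℝ} (hx : x ∈ simplex K) (k : Fin K) : x k ≤ 1 := by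
  rw [← hx.2]
  exact single_le_sum (f := x) (fun j _ => hx.1 j) (mem_univ k)

lemma sum_sq_sub_le_two {x p : Fin K → ℝ} (hx : x ∈ simplex K) (hp : p ∈ simplex K) :
    ∑ k, (x k - p k) ^ 2 ≤ 2 := by
  have hterm : ∀ k, (x k - p k) ^ 2 ≤ x k + p k := fun k => by
    nlinarith [hx.1 k, hp.1 k, le_one_of_mem_simplex hx k, le_one_of_mem_simplex hp k]
  calc ∑ k, (x k - p k) ^ 2 ≤ ∑ k, (x k + p k) := sum_le_sum fun k _ => hterm k
    _ = 2 := by rw [sum_add_distrib, hx.2, hp.2]; norm_num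

lemma sum_sq_vecMul_sub_le {t p : Fin K → ℝ} (ht : t ∈ simplex K) (hp : p ∈ simplex K)
    (A : Matrix (Fin K) (Fin K) ℝ) :
    ∑ k, (Matrix.vecMul t A k - p k) ^ 2 ≤ ∑ k, (∑ j, |A j k| + 1) ^ 2 := by
  refine sum_le_sum fun k _ => ?_
  have hvec : |Matrix.vecMul t A k| ≤ ∑ j, |A j k| := by
    rw [Matrix.vecMul, dotProduct]
    refine (abs_sum_le_sum_abs _ _).trans (sum_le_sum fun j _ => ?_)
    rw [abs_mul, abs_of_nonneg (ht.1 j)]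
    exact mul_le_of_le_one_left (abs_nonneg _) (le_one_of_mem_simplex ht j)
  have hpk : |p k| ≤ 1 := by rw [abs_of_nonneg (hp.1 k)]; exact le_one_of_mem_simplex hp k
  rw [← sq_abs]
  exact pow_le_pow_left₀ (abs_nonneg _) ((abs_sub _ _).trans (add_le_add hvec hpk)) 2

lemma abs_sum_sq_sub_sub_sum_sq_vecMul_sub_le {x t p : Fin K → ℝ} (hx : x ∈ simplex K)
    (ht : t ∈ simplex K) (hp : p ∈ simplex K) (A : Matrix (Fin K) (Fin K) ℝ) :
    |∑ k, (x k - p k) ^ 2 - ∑ k, (Matrix.vecMul t A k - p k) ^ 2|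
      ≤ 2 + ∑ k, (∑ j, |A j k| + 1) ^ 2 :=
  abs_sub_le_of_nonneg_of_le (sum_nonneg fun _ _ => sq_nonneg _)
    ((sum_sq_sub_le_two hx hp).trans (le_add_of_nonneg_right (sum_nonneg fun _ _ => sq_nonneg _)))
    (sum_nonneg fun _ _ => sq_nonneg _)
    ((sum_sq_vecMul_sub_le ht hp A).trans (le_add_of_nonneg_left zero_le_two))

end Simplex

section Empirical

variable {K n : ℕ}

lemma vecMul_empDist (y : Fin n → Fin K) (A : Matrix (Fin K) (Fin K) ℝ) (k : Fin K) :
    Matrix.vecMul (empDist y) A k = (∑ i, A (y i) k) / n := by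
  rw [← sum_fiberwise univ y fun i => A (y i) k]
  simp only [Matrix.vecMul, dotProduct, empDist, sum_div]
  refine sum_congr rfl fun j _ => ?_
  rw [sum_congr rfl fun i hi => by rw [(mem_filter.1 hi).2], sum_const, nsmul_eq_mul]
  ring

lemma empDist_mem_simplex (hn : n ≠ 0) (y : Fin n → Fin K) : empDist y ∈ simplex K := by
  refine ⟨fun k => by unfold empDist; positivity, ?_⟩
  have hcard : ∑ k, ((univ.filter fun i => y i = k).card : ℝ) = n := by
    rw [← Nat.cast_sum, ← card_eq_sum_card_fiberwise fun i _ => mem_univ (y i), card_univ,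
      Fintype.card_fin]
  simp only [empDist]
  rw [← sum_div, hcard, div_self (Nat.cast_ne_zero.2 hn)]

end Empirical

lemma iidE_sum_sq_vecMul_empDist_sub {K : ℕ} (q : Fin K → ℝ) (hq : ∑ j, q j = 1) {n : ℕ}
    (hn : n ≠ 0) (A : Matrix (Fin K) (Fin K) ℝ) (p : Fin K → ℝ) (hpA : Matrix.vecMul q A = p) :
    iidE q n (fun y => ∑ k, (Matrix.vecMul (empDist y) A k - p k) ^ 2)
      = 1 / n * ∑ k, (∑ j, q j * A j k ^ 2 - p k ^ 2) := by
  have hdev : ∀ (y : Fin n → Fin K) k,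
      Matrix.vecMul (empDist y) A k - p k = (∑ i, (A (y i) k - p k)) / n := by
    intro y k
    rw [vecMul_empDist, sum_sub_distrib, sum_const, card_univ, Fintype.card_fin, nsmul_eq_mul]
    field_simp
  have hfirst : ∀ k, ∑ j, q j * A j k = p k := fun k => by rw [← hpA]; rfl
  have hmean : ∀ k, ∑ j, q j * (A j k - p k) = 0 := by
    simp [mul_sub, sum_sub_distrib, ← sum_mul, hq, hfirst]
  have hvar : ∀ k, ∑ j, q j * (A j k - p k) ^ 2 = ∑ j, q j * A j k ^ 2 - p k ^ 2 := by
    intro k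
    have hexp : ∀ j, q j * (A j k - p k) ^ 2
        = q j * A j k ^ 2 - 2 * p k * (q j * A j k) + p k ^ 2 * q j := fun j => by ring
    simp_rw [hexp, sum_add_distrib, sum_sub_distrib, ← mul_sum, hfirst, hq]
    ring
  simp_rw [hdev, div_pow, div_eq_inv_mul _ ((n : ℝ) ^ 2)]
  rw [iidE_sum, mul_sum]
  refine sum_congr rfl fun k _ => ?_
  rw [iidE_const_mul, iidE_sq_sum q n hq _ (hmean k), hvar]
  field_simp

section Inverse

variable {m R : Type*} [Fintype m] [DecidableEq m] [CommRing R] {W : Matrix m m R}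

lemma vecMul_vecMul_nonsing_inv (hW : IsUnit W) (v : m → R) :
    Matrix.vecMul (Matrix.vecMul v W) W⁻¹ = v := by
  rw [Matrix.vecMul_vecMul, Matrix.mul_nonsing_inv W ((Matrix.isUnit_iff_isUnit_det W).1 hW),
    Matrix.vecMul_one]

lemma vecMul_nonsing_inv_vecMul (hW : IsUnit W) (v : m → R) :
    Matrix.vecMul (Matrix.vecMul v W⁻¹) W = v := by
  rw [Matrix.vecMul_vecMul, Matrix.nonsing_inv_mul W ((Matrix.isUnit_iff_isUnit_det W).1 hW),
    Matrix.vecMul_one]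

end Inverse

section RowStochastic

variable {K : ℕ} {W : Matrix (Fin K) (Fin K) ℝ}

lemma RowStochastic.sum_vecMul (hW : RowStochastic W) (v : Fin K → ℝ) :
    ∑ j, Matrix.vecMul v W j = ∑ i, v i := by
  simp only [Matrix.vecMul, dotProduct]
  rw [sum_comm]
  simp [← mul_sum, hW.2]

lemma RowStochastic.sum_vecMul_inv (hW : RowStochastic W) (hWinv : IsUnit W) (v : Fin K → ℝ) :
    ∑ j, Matrix.vecMul v W⁻¹ j = ∑ i, v i := by
  rw [← hW.sum_vecMul, vecMul_nonsing_inv_vecMul hWinv]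

lemma RowStochastic.vecMul_mem_simplex (hW : RowStochastic W) {r : Fin K → ℝ}
    (hr : r ∈ simplex K) : Matrix.vecMul r W ∈ simplex K :=
  ⟨fun j => by
    simp only [Matrix.vecMul, dotProduct]
    exact sum_nonneg fun i _ => mul_nonneg (hr.1 i) (hW.1 i j),
    (hW.sum_vecMul r).trans hr.2⟩

lemma RowStochastic.vecMul_pos (hW : RowStochastic W) (hWinv : IsUnit W) {p : Fin K → ℝ}
    (hp : ∀ k, 0 < p k) (j : Fin K) : 0 < Matrix.vecMul p W j := by
  obtain ⟨i, hi⟩ : ∃ i, W i j ≠ 0 := by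
    by_contra! h
    exact ((Matrix.isUnit_iff_isUnit_det W).1 hWinv).ne_zero
      (Matrix.det_eq_zero_of_column_eq_zero j h)
  exact sum_pos' (fun l _ => mul_nonneg (hp l).le (hW.1 l j))
    ⟨i, mem_univ i, mul_pos (hp i) ((hW.1 i j).lt_of_ne hi.symm)⟩

lemma RowStochastic.exists_sum_inv_neg (hW : RowStochastic W) (hWinv : IsUnit W) {n : ℕ}
    (hn : n ≠ 0) {y : Fin n → Fin K} (hy : Matrix.vecMul (empDist y) W⁻¹ ∉ simplex K) :
    ∃ k, ∑ i, W⁻¹ (y i) k < 0 := by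
  by_contra! h
  refine hy ⟨fun k => ?_, ?_⟩
  · rw [vecMul_empDist]
    exact div_nonneg (h k) n.cast_nonneg
  · rw [hW.sum_vecMul_inv hWinv, (empDist_mem_simplex hn y).2]

end RowStochastic

section KL

variable {K : ℕ}

lemma sub_le_mul_log_div {u v : ℝ} (hu : 0 ≤ u) (hv : 0 < v) : u - v ≤ u * Real.log (u / v) :=
  calc u - v = v * (u / v - 1) := by field_simp
    _ ≤ v * (u / v * Real.log (u / v)) :=
      mul_le_mul_of_nonneg_left (Real.self_sub_one_le_mul_log (div_nonneg hu hv.le)) hv.le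
    _ = u * Real.log (u / v) := by field_simp

lemma KL_nonneg {u v : Fin K → ℝ} (hu : u ∈ simplex K) (hv : ∀ k, 0 < v k)
    (hvsum : ∑ k, v k = 1) : 0 ≤ KL u v :=
  calc 0 = ∑ k, (u k - v k) := by rw [sum_sub_distrib, hu.2, hvsum, sub_self]
    _ ≤ KL u v := sum_le_sum fun k _ => sub_le_mul_log_div (hu.1 k) (hv k)

lemma mul_log_div_lineMap_le {c b μ : ℝ} (hc : 0 < c) (hb : 0 ≤ b) (hμ0 : 0 ≤ μ) (hμ1 : μ ≤ 1) :
    ((1 - μ) * c + μ * b) * Real.log (((1 - μ) * c + μ * b) / c)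
      ≤ μ * (b * Real.log (b / c)) := by
  have hsplit : ∀ x, x * Real.log (x / c) = x * Real.log x - x * Real.log c := fun x => by
    rcases eq_or_ne x 0 with rfl | hx
    · simp
    · rw [Real.log_div hx hc.ne']
      ring
  have hconv := Real.convexOn_mul_log.2 (Set.mem_Ici.2 hc.le) (Set.mem_Ici.2 hb)
    (sub_nonneg.2 hμ1) hμ0 (by ring)
  simp only [smul_eq_mul] at hconv
  rw [hsplit, hsplit]
  linear_combination hconv

lemma KL_lineMap_le {q s : Fin K → ℝ} (hq : ∀ j, 0 < q j) (hs : ∀ j, 0 ≤ s j) {μ : ℝ}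
    (hμ0 : 0 ≤ μ) (hμ1 : μ ≤ 1) : KL ((1 - μ) • q + μ • s) q ≤ μ * KL s q := by
  simp only [KL, mul_sum, Pi.add_apply, Pi.smul_apply, smul_eq_mul]
  exact sum_le_sum fun j _ => mul_log_div_lineMap_le (hq j) (hs j) hμ0 hμ1

end KL

lemma exists_lineMap_mem_simplexBoundary {K : ℕ} {p r : Fin K → ℝ} (hp : ∀ k, 0 < p k)
    (hpsum : ∑ k, p k = 1) (hr : ∑ k, r k = 1) {k : Fin K} (hrk : r k = 0) :
    ∃ μ ∈ Set.Icc (0 : ℝ) 1, (1 - μ) • p + μ • r ∈ simplexBoundary K := by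
  have hsum : ∀ μ : ℝ, ∑ l, ((1 - μ) • p + μ • r) l = 1 := fun μ => by
    simp [sum_add_distrib, ← mul_sum, hpsum, hr]
  by_cases hneg : (univ.filter fun l => r l < 0).Nonempty
  · obtain ⟨l₀, hl₀, hmin⟩ := exists_min_image _ (fun l => p l / (p l - r l)) hneg
    have hrl₀ : r l₀ < 0 := (mem_filter.1 hl₀).2
    have hden : 0 < p l₀ - r l₀ := by linarith [hp l₀]
    set μ := p l₀ / (p l₀ - r l₀) with hμ
    have hμ0 : 0 ≤ μ := (div_pos (hp l₀) hden).le
    have hμ1 : μ ≤ 1 := (div_le_one hden).2 (by linarith)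
    refine ⟨μ, ⟨hμ0, hμ1⟩, ⟨⟨fun l => ?_, hsum μ⟩, l₀, ?_⟩⟩
    · simp only [Pi.add_apply, Pi.smul_apply, smul_eq_mul]
      by_cases hl : r l < 0
      · have hle := hmin l (mem_filter.2 ⟨mem_univ l, hl⟩)
        rw [le_div_iff₀ (by linarith [hp l])] at hle
        linarith
      · nlinarith [hp l]
    · simp only [Pi.add_apply, Pi.smul_apply, smul_eq_mul, hμ]
      field_simp
      ring
  · refine ⟨1, ⟨zero_le_one, le_rfl⟩, ⟨⟨fun l => ?_, hsum 1⟩, k, by simp [hrk]⟩⟩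
    simp only [sub_self, zero_smul, one_smul, zero_add]
    exact not_lt.1 fun hl => hneg ⟨l, mem_filter.2 ⟨mem_univ l, hl⟩⟩

lemma Dbnd_le_KL {K : ℕ} {p : Fin K → ℝ} (hp : ∀ k, 0 < p k) (hpsum : ∑ k, p k = 1)
    {W : Matrix (Fin K) (Fin K) ℝ} (hW : RowStochastic W) (hWinv : IsUnit W)
    {s : Fin K → ℝ} (hs : s ∈ simplex K) {k : Fin K} (hk : Matrix.vecMul s W⁻¹ k = 0) :
    Dbnd p W ≤ KL s (Matrix.vecMul p W) := by
  set q := Matrix.vecMul p W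
  have hq := hW.vecMul_pos hWinv hp
  have hqsum : ∑ j, q j = 1 := (hW.sum_vecMul p).trans hpsum
  obtain ⟨μ, hμ, hb⟩ := exists_lineMap_mem_simplexBoundary hp hpsum
    ((hW.sum_vecMul_inv hWinv s).trans hs.2) hk
  have hbW : Matrix.vecMul ((1 - μ) • p + μ • Matrix.vecMul s W⁻¹) W = (1 - μ) • q + μ • s := by
    rw [Matrix.add_vecMul, Matrix.smul_vecMul, Matrix.smul_vecMul, vecMul_nonsing_inv_vecMul hWinv]
  have hbdd : BddBelow ((fun r => KL (Matrix.vecMul r W) q) '' simplexBoundary K) :=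
    ⟨0, by rintro _ ⟨r, hr, rfl⟩; exact KL_nonneg (hW.vecMul_mem_simplex hr.1) hq hqsum⟩
  calc Dbnd p W ≤ KL ((1 - μ) • q + μ • s) q := hbW ▸ csInf_le hbdd ⟨_, hb, rfl⟩
    _ ≤ μ * KL s q := KL_lineMap_le hq hs.1 hμ.1 hμ.2
    _ ≤ KL s q := mul_le_of_le_one_left (KL_nonneg hs hq hqsum) hμ.2

section Tilt

variable {K : ℕ}

lemma mul_exp_neg_mul_le_abs {t : ℝ} (ht : 0 ≤ t) (x : ℝ) : x * Real.exp (-t * x) ≤ |x| := by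
  rcases le_or_gt x 0 with hx | hx
  · exact (mul_nonpos_of_nonpos_of_nonneg hx (Real.exp_pos _).le).trans (abs_nonneg x)
  · rw [abs_of_pos hx]
    exact mul_le_of_le_one_right hx.le (Real.exp_le_one_iff.2 (by nlinarith))

lemma exists_sum_mul_exp_neg_mul_eq_zero {q f : Fin K → ℝ} (hq : ∀ j, 0 < q j)
    (hmean : 0 < ∑ j, q j * f j) {j₀ : Fin K} (hj₀ : f j₀ < 0) :
    ∃ t, 0 ≤ t ∧ ∑ j, q j * (f j * Real.exp (-t * f j)) = 0 := by
  set h : ℝ → ℝ := fun t => ∑ j, q j * (f j * Real.exp (-t * f j))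
  set S := ∑ j, q j * |f j|
  have hS : 0 ≤ S := sum_nonneg fun j _ => mul_nonneg (hq j).le (abs_nonneg _)
  have hqf : 0 < q j₀ * f j₀ ^ 2 := mul_pos (hq j₀) (sq_pos_of_neg hj₀)
  -- by `exp x ≥ 1 + x`, at `T` the term `j₀` alone is at most `-(S + 1)`; the others sum to `≤ S`
  set T := (S + 1) / (q j₀ * f j₀ ^ 2)
  have hT : 0 ≤ T := div_nonneg (by linarith) hqf.le
  have hcont : Continuous h := by fun_prop
  have hj₀T : q j₀ * (f j₀ * Real.exp (-T * f j₀)) ≤ -(S + 1) := by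
    have hexp : 1 + (-T * f j₀) ≤ Real.exp (-T * f j₀) := by
      linarith [Real.add_one_le_exp (-T * f j₀)]
    have hTq : T * (q j₀ * f j₀ ^ 2) = S + 1 := div_mul_cancel₀ _ hqf.ne'
    nlinarith [mul_le_mul_of_nonneg_left hexp (mul_nonneg (hq j₀).le (neg_nonneg.2 hj₀.le)),
      (hq j₀), sq_nonneg (f j₀)]
  have hrest : ∑ j ∈ univ.erase j₀, q j * (f j * Real.exp (-T * f j)) ≤ S :=
    calc _ ≤ ∑ j ∈ univ.erase j₀, q j * |f j| :=
          sum_le_sum fun j _ => mul_le_mul_of_nonneg_left (mul_exp_neg_mul_le_abs hT _) (hq j).le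
      _ ≤ S := sum_le_sum_of_subset_of_nonneg (erase_subset _ _) fun j _ _ =>
          mul_nonneg (hq j).le (abs_nonneg _)
  have hhT : h T < 0 := by
    simp only [h, ← add_sum_erase _ _ (mem_univ j₀)]
    linarith
  obtain ⟨t, ht, hzero⟩ := intermediate_value_Icc' hT hcont.continuousOn
    ⟨hhT.le, by simpa [h] using hmean.le⟩
  exact ⟨t, ht.1, hzero⟩

noncomputable def expTilt (q f : Fin K → ℝ) (t : ℝ) : Fin K → ℝ :=
  fun j => q j * Real.exp (-t * f j) / ∑ i, q i * Real.exp (-t * f i)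

variable {q : Fin K → ℝ} (f : Fin K → ℝ) (t : ℝ)

lemma sum_mul_exp_pos [Nonempty (Fin K)] (hq : ∀ j, 0 < q j) :
    0 < ∑ j, q j * Real.exp (-t * f j) :=
  sum_pos (fun j _ => mul_pos (hq j) (Real.exp_pos _)) univ_nonempty

lemma expTilt_mem_simplex [Nonempty (Fin K)] (hq : ∀ j, 0 < q j) : expTilt q f t ∈ simplex K := by
  have hM := sum_mul_exp_pos f t hq
  refine ⟨fun j => div_nonneg (mul_pos (hq j) (Real.exp_pos _)).le hM.le, ?_⟩
  simp only [expTilt]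
  rw [← sum_div, div_self hM.ne']

lemma sum_expTilt_mul_eq_zero (h : ∑ j, q j * (f j * Real.exp (-t * f j)) = 0) :
    ∑ j, expTilt q f t j * f j = 0 := by
  have hterm : ∀ j, q j * Real.exp (-t * f j) * f j = q j * (f j * Real.exp (-t * f j)) :=
    fun j => by ring
  simp only [expTilt, div_mul_eq_mul_div, ← sum_div, hterm, h, zero_div]

lemma KL_expTilt [Nonempty (Fin K)] (hq : ∀ j, 0 < q j) (hf : ∑ j, expTilt q f t j * f j = 0) :
    KL (expTilt q f t) q = -Real.log (∑ j, q j * Real.exp (-t * f j)) := by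
  set M := ∑ j, q j * Real.exp (-t * f j)
  have hM : 0 < M := sum_mul_exp_pos f t hq
  have hlog : ∀ j, Real.log (expTilt q f t j / q j) = -t * f j - Real.log M := fun j => by
    have hratio : expTilt q f t j / q j = Real.exp (-t * f j) / M := by
      simp only [expTilt, M]
      field_simp [(hq j).ne']
    rw [hratio, Real.log_div (Real.exp_ne_zero _) hM.ne', Real.log_exp]
  simp only [KL, hlog, mul_sub, sum_sub_distrib, ← sum_mul, (expTilt_mem_simplex f t hq).2]
  simp only [mul_left_comm _ (-t), ← mul_sum, hf]
  ring

end Tilt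

lemma iidP_sum_inv_neg_le {K : ℕ} {p : Fin K → ℝ} (hp : ∀ k, 0 < p k) (hpsum : ∑ k, p k = 1)
    {W : Matrix (Fin K) (Fin K) ℝ} (hW : RowStochastic W) (hWinv : IsUnit W) (k : Fin K)
    (n : ℕ) :
    iidP (Matrix.vecMul p W) n {y | ∑ i, W⁻¹ (y i) k < 0} ≤ Real.exp (-n * Dbnd p W) := by
  set q := Matrix.vecMul p W
  set f : Fin K → ℝ := fun j => W⁻¹ j k
  have hq := hW.vecMul_pos hWinv hp
  by_cases hf : ∀ j, 0 ≤ f j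
  · have hempty : {y : Fin n → Fin K | ∑ i, W⁻¹ (y i) k < 0} = ∅ :=
      Set.eq_empty_of_forall_notMem fun y hy => (sum_nonneg fun i _ => hf (y i)).not_gt hy
    simp [hempty, iidP, Real.exp_nonneg]
  push Not at hf
  obtain ⟨j₀, hj₀⟩ := hf
  have : Nonempty (Fin K) := ⟨k⟩
  have hmean : ∑ j, q j * f j = p k := congrFun (vecMul_vecMul_nonsing_inv hWinv p) k
  obtain ⟨t, ht, hzero⟩ := exists_sum_mul_exp_neg_mul_eq_zero hq (hmean ▸ hp k) hj₀
  have htilt := sum_expTilt_mul_eq_zero f t hzero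
  have hD : Dbnd p W ≤ KL (expTilt q f t) q :=
    Dbnd_le_KL hp hpsum hW hWinv (expTilt_mem_simplex f t hq) htilt
  calc iidP q n {y | ∑ i, f (y i) < 0} ≤ (∑ j, q j * Real.exp (-t * f j)) ^ n :=
        iidP_sum_neg_le q n (fun j => (hq j).le) f ht
    _ = Real.exp (-KL (expTilt q f t) q) ^ n := by
        rw [KL_expTilt f t hq htilt, neg_neg, Real.exp_log (sum_mul_exp_pos f t hq)]
    _ ≤ Real.exp (-Dbnd p W) ^ n := by gcongr
    _ = Real.exp (-n * Dbnd p W) := by rw [← Real.exp_nat_mul]; ring_nf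

theorem stmt_4_general (K : ℕ)
    (p : Fin K → ℝ) (hp : ∀ k, 0 < p k) (hpsum : ∑ k, p k = 1)
    (W : Matrix (Fin K) (Fin K) ℝ) (hW : RowStochastic W) (hWinv : IsUnit W)
    (Proj : (Fin K → ℝ) → (Fin K → ℝ))
    (hProjMem : ∀ x, Proj x ∈ simplex K)
    (hProjFix : ∀ x ∈ simplex K, Proj x = x) :
    (fun n : ℕ =>
        iidE (Matrix.vecMul p W) n
            (fun y => ∑ k, (Proj (Matrix.vecMul (empDist y) W⁻¹) k - p k) ^ 2)
          - (1 / n) * ∑ k, (nu p W 2 k - p k ^ 2))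
      =O[atTop] fun n : ℕ => Real.exp (-(n : ℝ) * Dbnd p W) := by
  set q := Matrix.vecMul p W
  have hpS : p ∈ simplex K := ⟨fun k => (hp k).le, hpsum⟩
  have hq := hW.vecMul_pos hWinv hp
  set C := 2 + ∑ k, (∑ j, |W⁻¹ j k| + 1) ^ 2
  refine IsBigO.of_bound (C * K) ?_
  filter_upwards [eventually_ge_atTop 1] with n hn
  have hn0 : n ≠ 0 := Nat.one_le_iff_ne_zero.1 hn
  have hB : {y : Fin n → Fin K | Matrix.vecMul (empDist y) W⁻¹ ∉ simplex K}
      ⊆ ⋃ k, {y | ∑ i, W⁻¹ (y i) k < 0} := fun y hy =>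
    Set.mem_iUnion.2 (hW.exists_sum_inv_neg hWinv hn0 hy)
  simp only [nu]
  rw [Real.norm_eq_abs, Real.norm_of_nonneg (Real.exp_nonneg _), ← iidE_sum_sq_vecMul_empDist_sub q
    ((hW.sum_vecMul p).trans hpsum) hn0 W⁻¹ p (vecMul_vecMul_nonsing_inv hWinv p)]
  calc _ ≤ C * iidP q n {y | Matrix.vecMul (empDist y) W⁻¹ ∉ simplex K} := by
        refine abs_iidE_sub_le_mul_iidP q n (fun j => (hq j).le) (fun y hy => ?_) fun y => ?_
        · rw [hProjFix _ (not_not.1 hy)]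
        · exact abs_sum_sq_sub_sub_sum_sq_vecMul_sub_le (hProjMem _) (empDist_mem_simplex hn0 y)
            hpS W⁻¹
    _ ≤ C * ∑ k : Fin K, Real.exp (-n * Dbnd p W) := by
        gcongr
        exact (iidP_le_sum_iidP q n (fun j => (hq j).le) hB).trans
          (sum_le_sum fun k _ => iidP_sum_inv_neg_le hp hpsum hW hWinv k n)
    _ = C * K * Real.exp (-n * Dbnd p W) := by simp [mul_assoc]

/-- expansion of the MSE loss, with exponentially small remainder. -/
theorem stmt_4 (K : ℕ) (hK : 2 ≤ K)
    (p : Fin K → ℝ) (hp : ∀ k, 0 < p k) (hpsum : ∑ k, p k = 1)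
    (W : Matrix (Fin K) (Fin K) ℝ) (hW : RowStochastic W) (hWinv : IsUnit W)
    (Proj : (Fin K → ℝ) → (Fin K → ℝ))
    (hProjMem : ∀ x, Proj x ∈ simplex K)
    (hProjFix : ∀ x ∈ simplex K, Proj x = x) :
    (fun n : ℕ =>
        iidE (Matrix.vecMul p W) n
            (fun y => ∑ k, (Proj (Matrix.vecMul (empDist y) W⁻¹) k - p k) ^ 2)
          - (1 / n) * ∑ k, (nu p W 2 k - p k ^ 2))
      =O[atTop] fun n : ℕ => Real.exp (-(n : ℝ) * Dbnd p W) :=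
  stmt_4_general K p hp hpsum W hW hWinv Proj hProjMem hProjFix

end RRStmt
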